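/- Let ψ : GL⁺ × Sym(3) → ℝ be a strain energy with ψ(·;S) continuously differentiable and non-degenerate for every S (for every sequence (Fₙ) in GL⁺, if det Fₙ → 0 or ‖Fₙ‖ + ‖Fₙ⁻¹‖ → +∞ then ψ(Fₙ;S) → +∞), and let P(F;S) denote the Frobenius gradient of ψ(·;S) and T(F;S) = (det F)⁻¹ P(F;S) Fᵀ the Cauchy stress. Assume ψ satisfies the ISRI condition ψ(F₂F₁;S) = (det F₁)·ψ(F₂; T(F₁;S)) for all F₁, F₂ ∈ GL⁺ and S ∈ Sym(3), and assume the relaxed energy is polyconvex: ψ(F;0) = h(F, cof F, det F) for some convex h : M₃(ℝ) × M₃(ℝ) × (0,∞) → ℝ. Then for every S ∈ Sym(3) the energy ψ(·;S) is polyconvex, i.e. there exists a convex function h_S with ψ(F;S) = h_S(F, cof F, det F) for all F ∈ GL⁺. -/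

import Mathlib

/-!
Non-degeneracy makes `ψ(·;S)` coercive on GL⁺, so it attains its minimum at some `F₀`, where
the Piola–Kirchhoff stress, and with it the Cauchy stress `T(F₀;S)`, vanishes. The ISRI identity
with `F₁ = F₀` then reads `ψ(F;S) = det F₀ · ψ(F F₀⁻¹;0)`. Since `cof` and `det` are
multiplicative, `(F F₀⁻¹, cof (F F₀⁻¹), det (F F₀⁻¹))` depends linearly on `(F, cof F, det F)`, so
`ψ(·;S)` is again a convex function of the minors.
-/

open Matrix Filter Topology

/-- The Frobenius norm of a 3×3 real matrix. -/
noncomputable def frob (A : Matrix (Fin 3) (Fin 3) ℝ) : ℝ :=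
  Real.sqrt (Matrix.trace (Aᵀ * A))

/-- GL⁺: the set of 3×3 real matrices with positive determinant. -/
def GLpos : Set (Matrix (Fin 3) (Fin 3) ℝ) := {F | 0 < F.det}

/-- The cofactor matrix of a 3×3 real matrix: `cof A = (det A) (A⁻¹)ᵀ`. -/
noncomputable def cof (A : Matrix (Fin 3) (Fin 3) ℝ) : Matrix (Fin 3) (Fin 3) ℝ :=
  A.det • (A⁻¹)ᵀ

/-- The Cauchy stress of an initially stressed material with Piola–Kirchhoff stress `P`:
`T(F;S) = (det F)⁻¹ P(F;S) Fᵀ`. -/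
noncomputable def cauchy
    (P : Matrix (Fin 3) (Fin 3) ℝ → Matrix (Fin 3) (Fin 3) ℝ → Matrix (Fin 3) (Fin 3) ℝ)
    (F S : Matrix (Fin 3) (Fin 3) ℝ) : Matrix (Fin 3) (Fin 3) ℝ :=
  (F.det)⁻¹ • (P F S * Fᵀ)

local notation "M₃" => Matrix (Fin 3) (Fin 3) ℝ

lemma Matrix.sq_entry_le_trace_transpose_mul_self {m n : Type*} [Fintype m] [Fintype n]
    (A : Matrix m n ℝ) (i : m) (j : n) : A i j ^ 2 ≤ (Aᵀ * A).trace := by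
  have htrace : (Aᵀ * A).trace = ∑ j, ∑ i, A i j ^ 2 := by
    simp only [trace, diag, mul_apply, transpose_apply, sq]
  rw [htrace]
  calc A i j ^ 2 ≤ ∑ i, A i j ^ 2 :=
        Finset.single_le_sum (fun i _ => sq_nonneg (A i j)) (Finset.mem_univ i)
    _ ≤ ∑ j, ∑ i, A i j ^ 2 :=
        Finset.single_le_sum (f := fun j => ∑ i, A i j ^ 2)
          (fun j _ => Finset.sum_nonneg fun i _ => sq_nonneg (A i j)) (Finset.mem_univ j)

lemma Matrix.isCompact_setOf_forall_abs_le {m n : Type*} [Fintype m] [Fintype n] (R : ℝ) :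
    IsCompact {A : Matrix m n ℝ | ∀ i j, |A i j| ≤ R} := by
  have hbox : {A : Matrix m n ℝ | ∀ i j, |A i j| ≤ R} =
      Set.univ.pi fun _ : m => Set.univ.pi fun _ : n => Set.Icc (-R) R := by
    ext A
    exact ⟨fun h i _ j _ => abs_le.mp (h i j), fun h i j => abs_le.mpr (h i trivial j trivial)⟩
  rw [hbox]
  exact isCompact_univ_pi fun _ => isCompact_univ_pi fun _ => isCompact_Icc

lemma IsMinOn.hasDerivAt_line_eq_zero {E : Type*} [AddCommGroup E] [Module ℝ E]
    [TopologicalSpace E] [ContinuousAdd E] [ContinuousSMul ℝ E] {U : Set E} {f : E → ℝ}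
    {x v : E} {f' : ℝ} (hU : IsOpen U) (hx : x ∈ U) (hmin : IsMinOn f U x)
    (hf : HasDerivAt (fun t : ℝ => f (x + t • v)) f' 0) : f' = 0 := by
  have hline : ContinuousAt (fun t : ℝ => x + t • v) 0 := by fun_prop
  have hloc : IsLocalMin f ((fun t : ℝ => x + t • v) 0) := by
    simpa using hmin.isLocalMin (hU.mem_nhds hx)
  exact (hloc.comp_continuous (g := fun t : ℝ => x + t • v) hline).hasDerivAt_eq_zero hf

lemma bddAbove_image_sublevel_of_tendsto_atTop {X : Type*} {U : Set X} {f g : X → ℝ}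
    (hfg : ∀ xs : ℕ → X, (∀ n, xs n ∈ U) → Tendsto (fun n => g (xs n)) atTop atTop →
      Tendsto (fun n => f (xs n)) atTop atTop) (c : ℝ) :
    BddAbove (g '' {x ∈ U | f x ≤ c}) := by
  by_contra hunbdd
  simp only [not_bddAbove_iff, Set.mem_image, Set.mem_sep_iff] at hunbdd
  choose y hy using fun n : ℕ => hunbdd n
  choose xs hxs hgxs using fun n => (hy n).1
  have hg : Tendsto (fun n => g (xs n)) atTop atTop :=
    tendsto_atTop_mono (fun n => by simpa only [hgxs] using (hy n).2.le)
      tendsto_natCast_atTop_atTop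
  obtain ⟨n, hn⟩ := ((hfg xs (fun n => (hxs n).1) hg).eventually_gt_atTop c).exists
  exact (hxs n).2.not_gt hn

lemma IsCompact.exists_isMinOn_of_sublevel_subset {X : Type*} [TopologicalSpace X]
    {U K : Set X} {f : X → ℝ} (hK : IsCompact K) (hf : ContinuousOn f K) {x₀ : X}
    (hx₀ : x₀ ∈ K) (hsub : ∀ x ∈ U, f x ≤ f x₀ → x ∈ K) : ∃ x ∈ K, IsMinOn f U x := by
  obtain ⟨x, hxK, hxmin⟩ := hK.exists_isMinOn ⟨x₀, hx₀⟩ hf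
  refine ⟨x, hxK, fun y hy => ?_⟩
  by_cases hle : f y ≤ f x₀
  · exact hxmin (hsub y hy hle)
  · exact (hxmin hx₀).trans (not_le.mp hle).le

lemma Matrix.eq_zero_of_isMinOn_of_hasDerivAt_trace {m n : Type*} [Fintype m] [Fintype n]
    {U : Set (Matrix m n ℝ)} {f : Matrix m n ℝ → ℝ} {X A : Matrix m n ℝ} (hU : IsOpen U)
    (hX : X ∈ U) (hmin : IsMinOn f U X)
    (hderiv : HasDerivAt (fun t : ℝ => f (X + t • A)) (Aᵀ * A).trace 0) : A = 0 := by
  rw [← trace_conjTranspose_mul_self_eq_zero_iff, conjTranspose_eq_transpose_of_trivial]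
  exact hmin.hasDerivAt_line_eq_zero hU hX hderiv

lemma abs_entry_le_frob (A : M₃) (i j : Fin 3) : |A i j| ≤ frob A := by
  rw [← Real.sqrt_sq_eq_abs]
  exact Real.sqrt_le_sqrt (A.sq_entry_le_trace_transpose_mul_self i j)

lemma frob_nonneg (A : M₃) : 0 ≤ frob A := Real.sqrt_nonneg _

lemma isOpen_GLpos : IsOpen GLpos := isOpen_lt continuous_const continuous_id.matrix_det

lemma one_mem_GLpos : (1 : M₃) ∈ GLpos := by simp [GLpos]

lemma mul_mem_GLpos {A B : M₃} (hA : A ∈ GLpos) (hB : B ∈ GLpos) : A * B ∈ GLpos := by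
  simpa only [GLpos, Set.mem_ofPred_eq, det_mul] using mul_pos hA hB

lemma inv_mem_GLpos {A : M₃} (hA : A ∈ GLpos) : A⁻¹ ∈ GLpos := by
  simpa only [GLpos, Set.mem_ofPred_eq, det_nonsing_inv, Ring.inverse_eq_inv'] using inv_pos.mpr hA

lemma cof_mul (A B : M₃) : cof (A * B) = cof A * cof B := by
  simp only [cof, Matrix.mul_inv_rev, det_mul, transpose_mul]
  rw [Matrix.smul_mul, Matrix.mul_smul, smul_smul]

def NondegenerateEnergy (W : M₃ → ℝ) : Prop :=
  ∀ Fs : ℕ → M₃, (∀ n, Fs n ∈ GLpos) →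
    (Tendsto (fun n => (Fs n).det) atTop (𝓝 0) ∨
      Tendsto (fun n => frob (Fs n) + frob (Fs n)⁻¹) atTop atTop) →
    Tendsto (fun n => W (Fs n)) atTop atTop

namespace NondegenerateEnergy

variable {W : M₃ → ℝ}

lemma bddAbove_frob_sublevel (hW : NondegenerateEnergy W) (c : ℝ) :
    BddAbove (frob '' {F ∈ GLpos | W F ≤ c}) :=
  bddAbove_image_sublevel_of_tendsto_atTop (fun Fs hFs hfrob => hW Fs hFs <| Or.inr <|
    tendsto_atTop_mono (fun _ => le_add_of_nonneg_right (frob_nonneg _)) hfrob) c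

lemma bddAbove_inv_det_sublevel (hW : NondegenerateEnergy W) (c : ℝ) :
    BddAbove ((fun F : M₃ => F.det⁻¹) '' {F ∈ GLpos | W F ≤ c}) :=
  bddAbove_image_sublevel_of_tendsto_atTop (fun Fs hFs hinv => hW Fs hFs <| Or.inl <| by
    simpa only [Pi.inv_def, inv_inv] using hinv.inv_tendsto_atTop) c

lemma exists_isMinOn (hW : NondegenerateEnergy W) (hcont : ContinuousOn W GLpos) :
    ∃ F₀ ∈ GLpos, IsMinOn W GLpos F₀ := by
  obtain ⟨R, hR⟩ := hW.bddAbove_frob_sublevel (W 1)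
  obtain ⟨r, hr⟩ := hW.bddAbove_inv_det_sublevel (W 1)
  set K := {A : M₃ | ∀ i j, |A i j| ≤ R} ∩ {A | (max r 1)⁻¹ ≤ A.det}
  have hK : IsCompact K := (Matrix.isCompact_setOf_forall_abs_le R).inter_right
    (isClosed_le continuous_const continuous_id.matrix_det)
  have hKpos : K ⊆ GLpos := fun F hF =>
    (inv_pos.mpr (zero_lt_one.trans_le (le_max_right r 1))).trans_le hF.2
  have hsub : ∀ F ∈ GLpos, W F ≤ W 1 → F ∈ K := fun F hF hle =>
    ⟨fun i j => (abs_entry_le_frob F i j).trans (hR ⟨F, ⟨hF, hle⟩, rfl⟩),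
      inv_le_of_inv_le₀ hF ((hr ⟨F, ⟨hF, hle⟩, rfl⟩).trans (le_max_left r 1))⟩
  obtain ⟨F₀, hF₀, hmin⟩ := hK.exists_isMinOn_of_sublevel_subset (hcont.mono hKpos)
    (hsub 1 one_mem_GLpos le_rfl) hsub
  exact ⟨F₀, hKpos hF₀, hmin⟩

end NondegenerateEnergy

def IsPolyconvex (W : M₃ → ℝ) : Prop :=
  ∃ h : M₃ × M₃ × ℝ → ℝ, ConvexOn ℝ {p : M₃ × M₃ × ℝ | 0 < p.2.2} h ∧
    ∀ F ∈ GLpos, W F = h (F, cof F, F.det)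

namespace IsPolyconvex

variable {W : M₃ → ℝ}

lemma congr (hW : IsPolyconvex W) {W' : M₃ → ℝ} (heq : Set.EqOn W W' GLpos) :
    IsPolyconvex W' := by
  obtain ⟨h, hconv, hrep⟩ := hW
  exact ⟨h, hconv, fun F hF => (heq hF).symm.trans (hrep F hF)⟩

lemma const_mul_comp_mul_right (hW : IsPolyconvex W) {c : ℝ} (hc : 0 ≤ c) {G : M₃}
    (hG : G ∈ GLpos) : IsPolyconvex fun F => c * W (F * G) := by
  obtain ⟨h, hconv, hrep⟩ := hW
  let L : M₃ × M₃ × ℝ →ₗ[ℝ] M₃ × M₃ × ℝ := (LinearMap.mulRight ℝ G).prodMap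
    ((LinearMap.mulRight ℝ (cof G)).prodMap (LinearMap.mulRight ℝ G.det))
  have hpre : L ⁻¹' {p | 0 < p.2.2} = {p | 0 < p.2.2} := by
    ext p
    exact mul_pos_iff_of_pos_right (show 0 < G.det from hG)
  refine ⟨fun p => c * h (L p), ?_, fun F hF => ?_⟩
  · rw [← hpre]
    exact (hconv.comp_linearMap L).smul hc
  · show c * W (F * G) = c * h (L (F, cof F, F.det))
    rw [hrep _ (mul_mem_GLpos hF hG), cof_mul, det_mul]
    rfl

end IsPolyconvex

theorem polyconvexity_inherited_under_ISRI_general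
    (ψ : Matrix (Fin 3) (Fin 3) ℝ → Matrix (Fin 3) (Fin 3) ℝ → ℝ)
    (P : Matrix (Fin 3) (Fin 3) ℝ → Matrix (Fin 3) (Fin 3) ℝ → Matrix (Fin 3) (Fin 3) ℝ)
    (hgrad : ∀ S : Matrix (Fin 3) (Fin 3) ℝ, ∀ F ∈ GLpos, ∀ H : Matrix (Fin 3) (Fin 3) ℝ,
      HasDerivAt (fun t : ℝ => ψ (F + t • H) S) (Matrix.trace ((P F S)ᵀ * H)) 0)
    (hψcont : ∀ S : Matrix (Fin 3) (Fin 3) ℝ, ContinuousOn (fun F => ψ F S) GLpos)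
    (hnondeg : ∀ S : Matrix (Fin 3) (Fin 3) ℝ, ∀ Fs : ℕ → Matrix (Fin 3) (Fin 3) ℝ,
      (∀ n, Fs n ∈ GLpos) →
      (Tendsto (fun n => (Fs n).det) atTop (𝓝 0) ∨
        Tendsto (fun n => frob (Fs n) + frob (Fs n)⁻¹) atTop atTop) →
      Tendsto (fun n => ψ (Fs n) S) atTop atTop)
    (hISRI : ∀ F₁ ∈ GLpos, ∀ F₂ ∈ GLpos, ∀ S : Matrix (Fin 3) (Fin 3) ℝ, Sᵀ = S →
      ψ (F₂ * F₁) S = F₁.det * ψ F₂ (cauchy P F₁ S))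
    (h : Matrix (Fin 3) (Fin 3) ℝ × Matrix (Fin 3) (Fin 3) ℝ × ℝ → ℝ)
    (hconv : ConvexOn ℝ {p : Matrix (Fin 3) (Fin 3) ℝ × Matrix (Fin 3) (Fin 3) ℝ × ℝ |
      0 < p.2.2} h)
    (hpoly0 : ∀ F ∈ GLpos, ψ F 0 = h (F, cof F, F.det)) :
    ∀ S : Matrix (Fin 3) (Fin 3) ℝ, Sᵀ = S →
      ∃ hS : Matrix (Fin 3) (Fin 3) ℝ × Matrix (Fin 3) (Fin 3) ℝ × ℝ → ℝ,
        ConvexOn ℝ {p : Matrix (Fin 3) (Fin 3) ℝ × Matrix (Fin 3) (Fin 3) ℝ × ℝ |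
          0 < p.2.2} hS ∧
        ∀ F ∈ GLpos, ψ F S = hS (F, cof F, F.det) := by
  intro S hS
  obtain ⟨F₀, hF₀, hmin⟩ := NondegenerateEnergy.exists_isMinOn (W := fun F => ψ F S) (hnondeg S)
    (hψcont S)
  have hstress_free : cauchy P F₀ S = 0 := by
    rw [cauchy, Matrix.eq_zero_of_isMinOn_of_hasDerivAt_trace isOpen_GLpos hF₀ hmin
      (hgrad S F₀ hF₀ _), Matrix.zero_mul, smul_zero]
  have hrelaxed : IsPolyconvex fun F => ψ F 0 := ⟨h, hconv, hpoly0⟩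
  refine (hrelaxed.const_mul_comp_mul_right (le_of_lt hF₀) (inv_mem_GLpos hF₀)).congr
    fun F hF => ?_
  have hISRI_F₀ := hISRI F₀ hF₀ (F * F₀⁻¹) (mul_mem_GLpos hF (inv_mem_GLpos hF₀)) S hS
  rw [nonsing_inv_mul_cancel_right _ _ (isUnit_iff_ne_zero.mpr (ne_of_gt hF₀)),
    hstress_free] at hISRI_F₀
  exact hISRI_F₀.symm

/-- Under the ISRI restriction, polyconvexity of the relaxed energy `ψ(·;0)` is inherited
by `ψ(·;S)` for every symmetric initial stress `S`. -/
theorem polyconvexity_inherited_under_ISRI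
    (ψ : Matrix (Fin 3) (Fin 3) ℝ → Matrix (Fin 3) (Fin 3) ℝ → ℝ)
    (P : Matrix (Fin 3) (Fin 3) ℝ → Matrix (Fin 3) (Fin 3) ℝ → Matrix (Fin 3) (Fin 3) ℝ)
    (hgrad : ∀ S : Matrix (Fin 3) (Fin 3) ℝ, ∀ F ∈ GLpos, ∀ H : Matrix (Fin 3) (Fin 3) ℝ,
      HasDerivAt (fun t : ℝ => ψ (F + t • H) S) (Matrix.trace ((P F S)ᵀ * H)) 0)
    (hψcont : ∀ S : Matrix (Fin 3) (Fin 3) ℝ, ContinuousOn (fun F => ψ F S) GLpos)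
    (hPcont : ∀ S : Matrix (Fin 3) (Fin 3) ℝ, ContinuousOn (fun F => P F S) GLpos)
    (hnondeg : ∀ S : Matrix (Fin 3) (Fin 3) ℝ, ∀ Fs : ℕ → Matrix (Fin 3) (Fin 3) ℝ,
      (∀ n, Fs n ∈ GLpos) →
      (Tendsto (fun n => (Fs n).det) atTop (𝓝 0) ∨
        Tendsto (fun n => frob (Fs n) + frob (Fs n)⁻¹) atTop atTop) →
      Tendsto (fun n => ψ (Fs n) S) atTop atTop)
    (hISRI : ∀ F₁ ∈ GLpos, ∀ F₂ ∈ GLpos, ∀ S : Matrix (Fin 3) (Fin 3) ℝ, Sᵀ = S →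
      ψ (F₂ * F₁) S = F₁.det * ψ F₂ (cauchy P F₁ S))
    (h : Matrix (Fin 3) (Fin 3) ℝ × Matrix (Fin 3) (Fin 3) ℝ × ℝ → ℝ)
    (hconv : ConvexOn ℝ {p : Matrix (Fin 3) (Fin 3) ℝ × Matrix (Fin 3) (Fin 3) ℝ × ℝ |
      0 < p.2.2} h)
    (hpoly0 : ∀ F ∈ GLpos, ψ F 0 = h (F, cof F, F.det)) :
    ∀ S : Matrix (Fin 3) (Fin 3) ℝ, Sᵀ = S →
      ∃ hS : Matrix (Fin 3) (Fin 3) ℝ × Matrix (Fin 3) (Fin 3) ℝ × ℝ → ℝ,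
        ConvexOn ℝ {p : Matrix (Fin 3) (Fin 3) ℝ × Matrix (Fin 3) (Fin 3) ℝ × ℝ |
          0 < p.2.2} hS ∧
        ∀ F ∈ GLpos, ψ F S = hS (F, cof F, F.det) :=
  polyconvexity_inherited_under_ISRI_general ψ P hgrad hψcont hnondeg hISRI h hconv hpoly0
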